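/- Let γ ∈ (0, √2). Then ∫_{0}^{π} (2 sin θ)^{−γ²/2} cos(2θ) dθ = sin(π γ²/4) · ((γ²/4)/(1 − γ²/4)) · Γ(1 − γ²/2) Γ(γ²/4) / Γ(1 − γ²/4), the integral on the left being absolutely convergent. -/

import Mathlib

/-!
With `s = γ²/2` and `a = (1 - s)/2`, the substitution `t = sin²(θ/2) = (1 - cos θ)/2` gives
`sin²θ = 4t(1 - t)` and `cos 2θ = 1 - 8t(1 - t)`, so the integral becomes
`4^(-s) (B(a, a) - 8 B(a + 1, a + 1))`. The recurrence `Γ(x + 1) = x Γ(x)` turns this into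
`s/(2 - s) · 4^(-s) B(a, a)`; Legendre's duplication formula evaluates
`4^(-s) B(a, a) = π Γ(1 - s)/Γ(1 - s/2)²`, and Euler's reflection formula rewrites
`π/Γ(1 - s/2)` as `sin(π s/2) Γ(s/2)`.
-/

open MeasureTheory Set Real ProbabilityTheory

theorem ofReal_rpow_mul_one_sub_rpow {u v t : ℝ} (ht : t ∈ Ioo 0 1) :
    ((t ^ (u - 1) * (1 - t) ^ (v - 1) : ℝ) : ℂ) =
      (t : ℂ) ^ ((u : ℂ) - 1) * (1 - (t : ℂ)) ^ ((v : ℂ) - 1) := by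
  push_cast [Complex.ofReal_cpow ht.1.le, Complex.ofReal_cpow (sub_pos.2 ht.2).le]
  rfl

theorem integrableOn_rpow_mul_one_sub_rpow {u v : ℝ} (hu : 0 < u) (hv : 0 < v) :
    IntegrableOn (fun t : ℝ => t ^ (u - 1) * (1 - t) ^ (v - 1)) (Ioo 0 1) := by
  have hℂ :
      IntegrableOn (fun t : ℝ => ((t ^ (u - 1) * (1 - t) ^ (v - 1) : ℝ) : ℂ)) (Ioo 0 1) :=
    ((intervalIntegrable_iff_integrableOn_Ioo_of_le zero_le_one).mp
      (Complex.betaIntegral_convergent (by simpa) (by simpa))).congr_fun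
      (fun _ ht => (ofReal_rpow_mul_one_sub_rpow ht).symm) measurableSet_Ioo
  simpa [IntegrableOn] using hℂ.re

theorem integral_rpow_mul_one_sub_rpow {u v : ℝ} (hu : 0 < u) (hv : 0 < v) :
    ∫ t in Ioo (0 : ℝ) 1, t ^ (u - 1) * (1 - t) ^ (v - 1) = beta u v := by
  rw [beta_eq_betaIntegralReal u v hu hv, Complex.betaIntegral,
    intervalIntegral.integral_of_le zero_le_one, integral_Ioc_eq_integral_Ioo,
    ← setIntegral_congr_fun measurableSet_Ioo (fun _ ht => ofReal_rpow_mul_one_sub_rpow ht),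
    integral_complex_ofReal, Complex.ofReal_re]

theorem beta_add_one_add_one {a : ℝ} (ha : 0 < a) :
    beta (a + 1) (a + 1) = a / (2 * (2 * a + 1)) * beta a a := by
  have hΓ2a : Gamma (a + 1 + (a + 1)) = (2 * a + 1) * (2 * a) * Gamma (a + a) := by
    rw [show a + 1 + (a + 1) = a + a + 1 + 1 by ring, Gamma_add_one (by positivity),
      Gamma_add_one (by positivity)]
    ring
  have hpos : 0 < Gamma (a + a) := Gamma_pos_of_pos (by positivity)
  rw [beta, beta, Gamma_add_one ha.ne', hΓ2a]
  field_simp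

theorem strictMonoOn_one_sub_cos_div_two :
    StrictMonoOn (fun θ => (1 - cos θ) / 2) (Icc 0 π) :=
  fun x hx y hy hxy => by have := strictAntiOn_cos hx hy hxy; dsimp; linarith

theorem image_one_sub_cos_div_two_Ioo :
    (fun θ => (1 - cos θ) / 2) '' Ioo 0 π = Ioo 0 1 := by
  rw [ContinuousOn.image_Ioo_of_strictMonoOn pi_pos.le (by fun_prop)
    strictMonoOn_one_sub_cos_div_two]
  norm_num

theorem hasDerivAt_one_sub_cos_div_two (θ : ℝ) :
    HasDerivAt (fun θ => (1 - cos θ) / 2) (sin θ / 2) θ := by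
  simpa using ((hasDerivAt_cos θ).const_sub 1).div_const 2

section HalfAngleSubstitution

variable {E : Type*} [NormedAddCommGroup E] [NormedSpace ℝ E]

theorem integrableOn_comp_one_sub_cos_div_two_iff (g : ℝ → E) :
    IntegrableOn (fun θ => (sin θ / 2) • g ((1 - cos θ) / 2)) (Ioo 0 π) ↔
      IntegrableOn g (Ioo 0 1) := by
  rw [← image_one_sub_cos_div_two_Ioo]
  exact (integrableOn_image_iff_integrableOn_deriv_smul_of_monotoneOn measurableSet_Ioo
    (fun θ _ => (hasDerivAt_one_sub_cos_div_two θ).hasDerivWithinAt)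
    (strictMonoOn_one_sub_cos_div_two.monotoneOn.mono Ioo_subset_Icc_self) g).symm

theorem integral_comp_one_sub_cos_div_two (g : ℝ → E) :
    ∫ θ in Ioo 0 π, (sin θ / 2) • g ((1 - cos θ) / 2) = ∫ t in Ioo 0 1, g t := by
  rw [← image_one_sub_cos_div_two_Ioo]
  exact (integral_image_eq_integral_deriv_smul_of_monotoneOn measurableSet_Ioo
    (fun θ _ => (hasDerivAt_one_sub_cos_div_two θ).hasDerivWithinAt)
    (strictMonoOn_one_sub_cos_div_two.monotoneOn.mono Ioo_subset_Icc_self) g).symm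

end HalfAngleSubstitution

theorem four_rpow_neg_mul_beta_self {s : ℝ} (hs : s < 2) :
    (4 : ℝ) ^ (-s) * beta ((1 - s) / 2) ((1 - s) / 2) =
      π * Gamma (1 - s) / Gamma (1 - s / 2) ^ 2 := by
  have hdup : Gamma ((1 - s) / 2) * Gamma (1 - s / 2) = Gamma (1 - s) * 2 ^ s * √π := by
    have h := Gamma_mul_Gamma_add_half ((1 - s) / 2)
    rwa [show (1 - s) / 2 + 1 / 2 = 1 - s / 2 by ring, show 2 * ((1 - s) / 2) = 1 - s by ring,
      show (1 : ℝ) - (1 - s) = s by ring] at h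
  have hΓ : 0 < Gamma (1 - s / 2) := Gamma_pos_of_pos (by linarith)
  have h4 : (4 : ℝ) ^ (-s) * (2 ^ s) ^ 2 = 1 := by
    rw [← rpow_natCast, ← rpow_mul zero_le_two, show (4 : ℝ) = 2 ^ (2 : ℝ) by norm_num,
      ← rpow_mul zero_le_two, ← rpow_add two_pos]
    ring_nf
    exact rpow_zero 2
  have hπ : √π ^ 2 = π := sq_sqrt pi_pos.le
  rw [beta, show (1 - s) / 2 + (1 - s) / 2 = 1 - s by ring, eq_div_iff (pow_pos hΓ 2).ne']
  calc 4 ^ (-s) * (Gamma ((1 - s) / 2) * Gamma ((1 - s) / 2) / Gamma (1 - s)) *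
        Gamma (1 - s / 2) ^ 2
      = 4 ^ (-s) * (Gamma ((1 - s) / 2) * Gamma (1 - s / 2)) ^ 2 / Gamma (1 - s) := by ring
    _ = (4 ^ (-s) * (2 ^ s) ^ 2) * √π ^ 2 *
          (Gamma (1 - s) * Gamma (1 - s) / Gamma (1 - s)) := by
      rw [hdup]; ring
    _ = π * Gamma (1 - s) := by rw [h4, hπ, mul_self_div_self]; ring

noncomputable def halfAngleIntegrand (s t : ℝ) : ℝ :=
  4 ^ (-s) * ((t * (1 - t)) ^ ((1 - s) / 2 - 1) - 8 * (t * (1 - t)) ^ ((1 - s) / 2))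

theorem two_mul_sin_rpow_mul_cos_two_mul_eq (s : ℝ) {θ : ℝ} (hθ : θ ∈ Ioo 0 π) :
    (2 * sin θ) ^ (-s) * cos (2 * θ) =
      (sin θ / 2) * halfAngleIntegrand s ((1 - cos θ) / 2) := by
  set x := sin θ / 2 with hx_def
  have hx : 0 < x := half_pos (sin_pos_of_pos_of_lt_pi hθ.1 hθ.2)
  have hsq : (1 - cos θ) / 2 * (1 - (1 - cos θ) / 2) = x ^ 2 := by
    rw [hx_def, div_pow, sin_sq]; ring
  have hpow : ∀ r : ℝ, (x ^ 2) ^ r = x ^ (2 * r) := fun r => by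
    rw [← rpow_natCast_mul hx.le]; norm_num
  rw [halfAngleIntegrand, hsq, hpow, hpow, show 2 * ((1 - s) / 2 - 1) = -s - 1 by ring,
    show 2 * ((1 - s) / 2) = -s + 1 by ring, rpow_sub_one hx.ne', rpow_add_one hx.ne',
    show 2 * sin θ = 4 * x by rw [hx_def]; ring, mul_rpow (by norm_num) hx.le,
    cos_two_mul_eq_one_sub, show sin θ = 2 * x by rw [hx_def]; ring]
  field_simp
  ring

theorem integrableOn_mul_one_sub_rpow {a : ℝ} (ha : 0 < a) :
    IntegrableOn (fun t : ℝ => (t * (1 - t)) ^ (a - 1)) (Ioo 0 1) :=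
  (integrableOn_rpow_mul_one_sub_rpow ha ha).congr_fun
    (fun _ ht => (mul_rpow ht.1.le (sub_pos.2 ht.2).le).symm) measurableSet_Ioo

theorem integral_mul_one_sub_rpow {a : ℝ} (ha : 0 < a) :
    ∫ t in Ioo (0 : ℝ) 1, (t * (1 - t)) ^ (a - 1) = beta a a := by
  rw [← integral_rpow_mul_one_sub_rpow ha ha]
  exact setIntegral_congr_fun measurableSet_Ioo
    (fun _ ht => mul_rpow ht.1.le (sub_pos.2 ht.2).le)

theorem integrableOn_halfAngleIntegrand {s : ℝ} (hs : s < 1) :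
    IntegrableOn (halfAngleIntegrand s) (Ioo 0 1) := by
  have ha : 0 < (1 - s) / 2 := by linarith
  have h₁ := integrableOn_mul_one_sub_rpow (a := (1 - s) / 2 + 1) (by linarith)
  rw [add_sub_cancel_right] at h₁
  exact ((integrableOn_mul_one_sub_rpow ha).sub (h₁.const_mul 8)).const_mul _

theorem integral_halfAngleIntegrand {s : ℝ} (hs : s < 1) :
    ∫ t in Ioo (0 : ℝ) 1, halfAngleIntegrand s t =
      s / (2 - s) * (4 ^ (-s) * beta ((1 - s) / 2) ((1 - s) / 2)) := by
  have ha : 0 < (1 - s) / 2 := by linarith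
  have h₁ := integrableOn_mul_one_sub_rpow (a := (1 - s) / 2 + 1) (by linarith)
  have hI₁ := integral_mul_one_sub_rpow (a := (1 - s) / 2 + 1) (by linarith)
  rw [add_sub_cancel_right] at h₁ hI₁
  unfold halfAngleIntegrand
  rw [integral_const_mul, integral_sub (integrableOn_mul_one_sub_rpow ha) (h₁.const_mul 8),
    integral_const_mul, integral_mul_one_sub_rpow ha, hI₁, beta_add_one_add_one ha,
    show 2 * (2 * ((1 - s) / 2) + 1) = 2 * (2 - s) by ring]
  have h2s : 2 - s ≠ 0 := by linarith
  field_simp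
  ring

theorem integrableOn_two_mul_sin_rpow_mul_cos_two_mul {s : ℝ} (hs : s < 1) :
    IntegrableOn (fun θ => (2 * sin θ) ^ (-s) * cos (2 * θ)) (Ioo 0 π) :=
  ((integrableOn_comp_one_sub_cos_div_two_iff _).2 (integrableOn_halfAngleIntegrand hs)).congr_fun
    (fun _ hθ => (two_mul_sin_rpow_mul_cos_two_mul_eq s hθ).symm) measurableSet_Ioo

theorem integral_two_mul_sin_rpow_mul_cos_two_mul {s : ℝ} (hs : s < 1) :
    ∫ θ in Ioo 0 π, (2 * sin θ) ^ (-s) * cos (2 * θ) =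
      s / (2 - s) * (π * Gamma (1 - s) / Gamma (1 - s / 2) ^ 2) := by
  rw [← four_rpow_neg_mul_beta_self (by linarith), ← integral_halfAngleIntegrand hs,
    ← integral_comp_one_sub_cos_div_two]
  exact setIntegral_congr_fun measurableSet_Ioo
    (fun _ hθ => two_mul_sin_rpow_mul_cos_two_mul_eq s hθ)

theorem stmt6 (γ : ℝ) (hγ0 : 0 < γ) (hγ2 : γ < Real.sqrt 2) :
    IntegrableOn (fun θ : ℝ => (2 * Real.sin θ) ^ (-(γ ^ 2) / 2) * Real.cos (2 * θ))
      (Ioo 0 Real.pi) volume ∧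
    (∫ θ in Ioo 0 Real.pi, (2 * Real.sin θ) ^ (-(γ ^ 2) / 2) * Real.cos (2 * θ)) =
      Real.sin (Real.pi * γ ^ 2 / 4) * ((γ ^ 2 / 4) / (1 - γ ^ 2 / 4)) *
        (Real.Gamma (1 - γ ^ 2 / 2) * Real.Gamma (γ ^ 2 / 4) /
          Real.Gamma (1 - γ ^ 2 / 4)) := by
  have hs1 : γ ^ 2 / 2 < 1 := by
    have := (sq_lt_sq₀ hγ0.le (sqrt_nonneg 2)).2 hγ2
    rw [sq_sqrt zero_le_two] at this
    linarith
  have hs0 : 0 < γ ^ 2 / 2 := by positivity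
  set s := γ ^ 2 / 2
  have hsin : 0 < sin (π * (s / 2)) :=
    sin_pos_of_pos_of_lt_pi (by positivity) (by nlinarith [pi_pos])
  have hΓ : Gamma (1 - s / 2) ≠ 0 := (Gamma_pos_of_pos (by linarith)).ne'
  have hπ : sin (π * (s / 2)) * Gamma (s / 2) * Gamma (1 - s / 2) = π := by
    rw [mul_assoc, Gamma_mul_Gamma_one_sub, mul_div_cancel₀ _ hsin.ne']
  rw [show -(γ ^ 2) / 2 = -s by ring, show γ ^ 2 / 4 = s / 2 by ring,
    show π * γ ^ 2 / 4 = π * (s / 2) by ring]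
  refine ⟨integrableOn_two_mul_sin_rpow_mul_cos_two_mul hs1, ?_⟩
  rw [integral_two_mul_sin_rpow_mul_cos_two_mul hs1]
  nth_rw 1 [← hπ]
  field_simp
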